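/- A clause-set F is a minimal premise set if and only if, for φ the partial assignment setting precisely the pure literals of F to false: (1) φ * F is minimally unsatisfiable, and (2) φ is contraction-free for F, i.e., for distinct clauses C, D ∈ F the clauses φ*{C} and φ*{D} are distinct. -/
import Mathlib



/-- Literals: a variable (ℕ) with a polarity. -/
abbrev Lit := ℕ × Bool

/-- Complement of a literal. -/
def Lit.comp (x : Lit) : Lit := (x.1, !x.2)

/-- A clause is a finite set of literals. -/
abbrev Clause := Finset Lit

/-- A clause-set (CNF). -/
abbrev ClauseSet := Finset Clause

/-- Complementation of all literals of a clause. -/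
def Clause.compl (C : Clause) : Clause := C.image Lit.comp

/-- Value of a literal under a total assignment. -/
def Lit.eval (a : ℕ → Bool) (x : Lit) : Bool := if x.2 then a x.1 else !(a x.1)

/-- A clause is satisfied by an assignment iff some literal evaluates to true. -/
def Clause.sat (a : ℕ → Bool) (C : Clause) : Prop := ∃ x ∈ C, Lit.eval a x = true

/-- An assignment satisfies a clause-set (as CNF) iff it satisfies every clause. -/
def satisfies (a : ℕ → Bool) (F : ClauseSet) : Prop := ∀ C ∈ F, Clause.sat a C

/-- Semantic entailment of a clause. -/
def entails (F : ClauseSet) (C : Clause) : Prop := ∀ a, satisfies a F → Clause.sat a C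

def unsat (F : ClauseSet) : Prop := ¬ ∃ a, satisfies a F

/-- Logical equivalence of clause-sets. -/
def equivCls (F G : ClauseSet) : Prop := ∀ a, satisfies a F ↔ satisfies a G

/-- Minimally unsatisfiable clause-sets. -/
def minUnsat (F : ClauseSet) : Prop := unsat F ∧ ∀ F' ⊂ F, ¬ unsat F'

/-- A clause is complement-free (no clashing pair). -/
def tautFree (C : Clause) : Prop := ∀ x ∈ C, Lit.comp x ∉ C

/-- F is a minimal premise set for clause C. -/
def mpsFor (F : ClauseSet) (C : Clause) : Prop :=
  tautFree C ∧ entails F C ∧ ∀ F' ⊂ F, ¬ entails F' C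

/-- F is a minimal premise set. -/
def isMps (F : ClauseSet) : Prop := ∃ C, mpsFor F C

/-- C is a prime implicate of F. -/
def primeImp (F : ClauseSet) (C : Clause) : Prop :=
  tautFree C ∧ entails F C ∧ ∀ C' ⊂ C, ¬ entails F C'

/-- The set of all prime implicates of F. -/
def primeSet (F : ClauseSet) : Set Clause := {C | primeImp F C}

/-- The set of literals occurring in F. -/
def lits (F : ClauseSet) : Finset Lit := F.sup id

/-- The pure clause of F: the set of pure literals of F. -/
def pureC (F : ClauseSet) : Clause := (lits F).filter (fun x => Lit.comp x ∉ lits F)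

def varsC (C : Clause) : Finset ℕ := C.image Prod.fst

def vars (F : ClauseSet) : Finset ℕ := F.sup varsC

/-- Partial assignments. -/
abbrev PAssign := ℕ → Option Bool

/-- Value of a literal under a partial assignment. -/
def Lit.pval (φ : PAssign) (x : Lit) : Option Bool :=
  (φ x.1).map (fun b => if x.2 then b else !b)

/-- Removing falsified literals from a clause. -/
def papplyC (φ : PAssign) (C : Clause) : Clause := C.filter (fun x => Lit.pval φ x ≠ some false)

/-- A clause is satisfied by a partial assignment. -/
def csat (φ : PAssign) (C : Clause) : Prop := ∃ x ∈ C, Lit.pval φ x = some true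

instance (φ : PAssign) (C : Clause) : Decidable (csat φ C) := by
  unfold csat; exact inferInstance

/-- Application φ * F of a partial assignment to a clause-set. -/
def papply (φ : PAssign) (F : ClauseSet) : ClauseSet :=
  (F.filter (fun C => ¬ csat φ C)).image (papplyC φ)

/-- The partial assignment setting precisely the pure literals of F to false. -/
def pureFalse (F : ClauseSet) : PAssign := fun v =>
  if ((v, true) : Lit) ∈ pureC F then some false
  else if ((v, false) : Lit) ∈ pureC F then some true
  else none

/-- Doping: add a fresh positive variable `u C` to every clause C. -/
def dope (u : Clause → ℕ) (F : ClauseSet) : ClauseSet :=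
  F.image (fun C => insert ((u C, true) : Lit) C)

/-- The doping variables are fresh and pairwise distinct. -/
def freshDoping (u : Clause → ℕ) (F : ClauseSet) : Prop :=
  (∀ C ∈ F, u C ∉ vars F) ∧ Set.InjOn u ↑F

/-- Resolution trees: axioms at leaves, resolution steps at inner nodes
(with the designated resolution literal). -/
inductive ResTree where
  | ax : Clause → ResTree
  | res : Lit → ResTree → ResTree → ResTree

/-- Conclusion clause of a resolution tree. -/
def ResTree.concl : ResTree → Clause
  | .ax C => C
  | .res x T1 T2 => (T1.concl ∪ T2.concl) \ {x, Lit.comp x}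

/-- Validity: at each step the two parents clash in exactly the resolution literal. -/
def ResTree.valid : ResTree → Prop
  | .ax _ => True
  | .res x T1 T2 => T1.valid ∧ T2.valid ∧ T1.concl ∩ Clause.compl T2.concl = {x}

/-- Axioms (leaf clauses) of a resolution tree. -/
def ResTree.axioms : ResTree → ClauseSet
  | .ax C => {C}
  | .res _ T1 T2 => T1.axioms ∪ T2.axioms

/-- Horton-Strahler number of a resolution tree. -/
def ResTree.hts : ResTree → ℕ
  | .ax _ => 0
  | .res _ T1 T2 => if T1.hts = T2.hts then T1.hts + 1 else max T1.hts T2.hts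

/-- Regularity: no resolution variable repeated on a root-to-leaf path. -/
def ResTree.regAux : ResTree → Finset ℕ → Prop
  | .ax _, _ => True
  | .res x T1 T2, S => x.1 ∉ S ∧ T1.regAux (insert x.1 S) ∧ T2.regAux (insert x.1 S)

def ResTree.regular (T : ResTree) : Prop := T.regAux ∅

/-- k-resolution: each step has a parent clause of length at most k. -/
def ResTree.kres (k : ℕ) : ResTree → Prop
  | .ax _ => True
  | .res _ T1 T2 => (T1.concl.card ≤ k ∨ T2.concl.card ≤ k) ∧ T1.kres k ∧ T2.kres k

/-- F has a resolution refutation of Horton-Strahler number at most k. -/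
def refutesLe (F : ClauseSet) (k : ℕ) : Prop :=
  ∃ T : ResTree, T.valid ∧ T.axioms ⊆ F ∧ T.concl = ∅ ∧ T.hts ≤ k

/-- Hardness at most k: every unsatisfiable instantiation has a refutation of
Horton-Strahler number at most k. -/
def hdLe (F : ClauseSet) (k : ℕ) : Prop :=
  ∀ φ : PAssign, unsat (papply φ F) → refutesLe (papply φ F) k

/-- Hardness. -/
noncomputable def hd (F : ClauseSet) : ℕ := sInf {k | hdLe F k}

/-- F has a k-resolution refutation. -/
def kresRefutes (F : ClauseSet) (k : ℕ) : Prop :=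
  ∃ T : ResTree, T.valid ∧ T.axioms ⊆ F ∧ T.concl = ∅ ∧ ResTree.kres k T

/-- Asymmetric width-hardness at most k. -/
def whdLe (F : ClauseSet) (k : ℕ) : Prop :=
  ∀ φ : PAssign, unsat (papply φ F) → kresRefutes (papply φ F) k

/-- Hyperedge E^k_C of the trigger hypergraph of F. -/
def Ek (F : ClauseSet) (k : ℕ) (C : Clause) : Set Clause :=
  {C' | primeImp F C' ∧ C' ∩ Clause.compl C = ∅ ∧ (C' \ C).card ≤ k}


section MpsAux

variable {F : ClauseSet}

private lemma comp_comp (x : Lit) : Lit.comp (Lit.comp x) = x := by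
  simp [Lit.comp]

private lemma eval_comp (a : ℕ → Bool) (x : Lit) :
    Lit.eval a (Lit.comp x) = !(Lit.eval a x) := by
  obtain ⟨v, b⟩ := x
  cases b <;> simp [Lit.eval, Lit.comp]

private lemma mem_lits {C : Clause} {x : Lit} (hC : C ∈ F) (hx : x ∈ C) :
    x ∈ lits F := Finset.mem_sup.mpr ⟨C, hC, hx⟩

private lemma mem_pureC {x : Lit} :
    x ∈ pureC F ↔ x ∈ lits F ∧ Lit.comp x ∉ lits F := by
  simp [pureC, Finset.mem_filter]

private lemma not_both_pure {v : ℕ} (h1 : ((v, true) : Lit) ∈ pureC F) :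
    ((v, false) : Lit) ∉ pureC F := by
  intro h2
  have h := (mem_pureC.mp h1).2
  have h2' := (mem_pureC.mp h2).1
  simp [Lit.comp] at h
  exact h h2'

private lemma pval_false_iff {x : Lit} :
    Lit.pval (pureFalse F) x = some false ↔ x ∈ pureC F := by
  obtain ⟨v, b⟩ := x
  unfold Lit.pval pureFalse
  by_cases h1 : ((v, true) : Lit) ∈ pureC F
  · have h2 := not_both_pure h1
    cases b <;> simp [h1, h2]
  · by_cases h2 : ((v, false) : Lit) ∈ pureC F
    · cases b <;> simp [h1, h2]
    · cases b <;> simp [h1, h2]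

private lemma pval_true_iff {x : Lit} :
    Lit.pval (pureFalse F) x = some true ↔ Lit.comp x ∈ pureC F := by
  obtain ⟨v, b⟩ := x
  unfold Lit.pval pureFalse
  by_cases h1 : ((v, true) : Lit) ∈ pureC F
  · have h2 := not_both_pure h1
    cases b <;> simp [h1, h2, Lit.comp]
  · by_cases h2 : ((v, false) : Lit) ∈ pureC F
    · cases b <;> simp [h1, h2, Lit.comp]
    · cases b <;> simp [h1, h2, Lit.comp]

private lemma pval_none_iff {x : Lit} :
    Lit.pval (pureFalse F) x = none ↔
      (((x.1, true) : Lit) ∉ pureC F ∧ ((x.1, false) : Lit) ∉ pureC F) := by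
  obtain ⟨v, b⟩ := x
  unfold Lit.pval pureFalse
  by_cases h1 : ((v, true) : Lit) ∈ pureC F
  · cases b <;> simp [h1]
  · by_cases h2 : ((v, false) : Lit) ∈ pureC F
    · cases b <;> simp [h1, h2]
    · cases b <;> simp [h1, h2]

private lemma not_csat {C : Clause} (hC : C ∈ F) : ¬ csat (pureFalse F) C := by
  rintro ⟨x, hx, hval⟩
  have h := pval_true_iff.mp hval
  have h1 := (mem_pureC.mp h).2
  rw [comp_comp] at h1
  exact h1 (mem_lits hC hx)

private lemma papply_eq {G : ClauseSet} (hG : G ⊆ F) :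
    papply (pureFalse F) G = G.image (papplyC (pureFalse F)) := by
  unfold papply
  congr 1
  exact Finset.filter_true_of_mem (fun C hC => not_csat (hG hC))

private lemma reduct_not_pure {D : Clause} (hD : D ∈ F) {y : Lit}
    (hy : y ∈ papplyC (pureFalse F) D) :
    y ∈ D ∧ ((y.1, true) : Lit) ∉ pureC F ∧ ((y.1, false) : Lit) ∉ pureC F := by
  have hmem : y ∈ D ∧ Lit.pval (pureFalse F) y ≠ some false := Finset.mem_filter.mp hy
  refine ⟨hmem.1, ?_⟩
  have hne_true : Lit.pval (pureFalse F) y ≠ some true := by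
    intro h
    have h2 := (mem_pureC.mp (pval_true_iff.mp h)).2
    rw [comp_comp] at h2
    exact h2 (mem_lits hD hmem.1)
  have hnone : Lit.pval (pureFalse F) y = none := by
    rcases hpv : Lit.pval (pureFalse F) y with _ | b
    · rfl
    · cases b
      · exact absurd hpv hmem.2
      · exact absurd hpv hne_true
  exact pval_none_iff.mp hnone

private lemma sat_of_sat_papply {G : ClauseSet} (hG : G ⊆ F) {a : ℕ → Bool}
    (ha : satisfies a (papply (pureFalse F) G)) : satisfies a G := by
  intro D hD
  have hmem : papplyC (pureFalse F) D ∈ papply (pureFalse F) G := by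
    rw [papply_eq hG]; exact Finset.mem_image_of_mem _ hD
  obtain ⟨y, hy, hey⟩ := ha _ hmem
  exact ⟨y, (Finset.mem_filter.mp hy).1, hey⟩

private lemma sat_papply_of_sat {G : ClauseSet} (hG : G ⊆ F) {a : ℕ → Bool}
    (hpure : ∀ x ∈ pureC F, Lit.eval a x = false)
    (ha : satisfies a G) : satisfies a (papply (pureFalse F) G) := by
  rw [papply_eq hG]
  intro D' hD'
  obtain ⟨D, hD, rfl⟩ := Finset.mem_image.mp hD'
  obtain ⟨y, hy, hey⟩ := ha D hD
  refine ⟨y, Finset.mem_filter.mpr ⟨hy, ?_⟩, hey⟩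
  intro hval
  have h := hpure y (pval_false_iff.mp hval)
  rw [hey] at h
  simp at h

private lemma eval_congr {a a' : ℕ → Bool} {y : Lit} (h : a y.1 = a' y.1) :
    Lit.eval a y = Lit.eval a' y := by
  unfold Lit.eval; rw [h]

private lemma eq_or_comp {x y : Lit} (h : y.1 = x.1) : y = x ∨ y = Lit.comp x := by
  obtain ⟨v, b⟩ := x; obtain ⟨w, c⟩ := y
  simp only at h; subst h
  cases b <;> cases c <;> simp [Lit.comp]

end MpsAux

/-- F is a minimal premise set iff, for φ setting precisely the pure literals of F to
false, φ * F is minimally unsatisfiable and φ is contraction-free for F. -/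
theorem mps_characterisation (F : ClauseSet) :
    isMps F ↔
      (minUnsat (papply (pureFalse F) F) ∧
        ∀ C ∈ F, ∀ D ∈ F, C ≠ D →
          papply (pureFalse F) {C} ≠ papply (pureFalse F) {D}) := by
  constructor
  · rintro ⟨K, htf, hent, hmin⟩
    -- Claim B: no literal of K has its complement occurring in F
    have claimB : ∀ y ∈ K, Lit.comp y ∉ lits F := by
      intro y hy hcomp
      obtain ⟨D, hD, hyD⟩ := Finset.mem_sup.mp hcomp
      have hGsub : F.filter (fun E => Lit.comp y ∉ E) ⊂ F := by
        refine ⟨Finset.filter_subset _ _, fun hsub => ?_⟩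
        exact (Finset.mem_filter.mp (hsub hD)).2 hyD
      have hne := hmin _ hGsub
      unfold entails at hne; push_neg at hne
      obtain ⟨a, haG, haK⟩ := hne
      have hyfalse : Lit.eval a y = false := by
        by_contra h
        exact haK ⟨y, hy, by simpa using h⟩
      have hcompT : Lit.eval a (Lit.comp y) = true := by
        rw [eval_comp, hyfalse]; rfl
      have haF : satisfies a F := by
        intro D' hD'
        by_cases hc : Lit.comp y ∈ D'
        · exact ⟨_, hc, hcompT⟩
        · exact haG D' (Finset.mem_filter.mpr ⟨hD', hc⟩)
      exact haK (hent a haF)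
    -- Claim A: every pure literal belongs to K
    have claimA : pureC F ⊆ K := by
      intro x hx
      by_contra hxK
      obtain ⟨hxF, hxcomp⟩ := mem_pureC.mp hx
      obtain ⟨D, hD, hxD⟩ := Finset.mem_sup.mp hxF
      have hGsub : F.filter (fun E => x ∉ E) ⊂ F := by
        refine ⟨Finset.filter_subset _ _, fun hsub => ?_⟩
        exact (Finset.mem_filter.mp (hsub hD)).2 hxD
      have hne := hmin _ hGsub
      unfold entails at hne; push_neg at hne
      obtain ⟨a, haG, haK⟩ := hne
      set a' : ℕ → Bool := fun v => if v = x.1 then x.2 else a v with ha'def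
      have hax : Lit.eval a' x = true := by
        have : a' x.1 = x.2 := by simp [ha'def]
        unfold Lit.eval
        rw [this]
        cases hb : x.2 <;> simp [hb]
      have haF' : satisfies a' F := by
        intro D' hD'
        by_cases hc : x ∈ D'
        · exact ⟨x, hc, hax⟩
        · obtain ⟨y, hyD', hey⟩ := haG D' (Finset.mem_filter.mpr ⟨hD', hc⟩)
          refine ⟨y, hyD', ?_⟩
          rw [← hey]
          apply (eval_congr _).symm
          have hne : y.1 ≠ x.1 := by
            intro h
            rcases eq_or_comp h with rfl | rfl
            · exact hc hyD'
            · exact hxcomp (mem_lits hD' hyD')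
          simp [ha'def, hne]
      obtain ⟨z, hzK, hez⟩ := hent a' haF'
      have hzne : z.1 ≠ x.1 := by
        intro h
        rcases eq_or_comp h with rfl | rfl
        · exact hxK hzK
        · have hcb := claimB _ hzK
          rw [comp_comp] at hcb
          exact hcb hxF
      refine haK ⟨z, hzK, ?_⟩
      rw [← hez]
      apply eval_congr
      simp [ha'def, hzne]
    -- key: variables of reducts are untouched by assignments changing only K-vars / pure vars
    have keyvar : ∀ D ∈ F, ∀ y ∈ papplyC (pureFalse F) D, ∀ c : Bool,
        ((y.1, c) : Lit) ∉ K := by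
      intro D hD y hy c hc
      obtain ⟨hyD, hnp1, hnp0⟩ := reduct_not_pure hD hy
      have hyF := mem_lits hD hyD
      have hcb := claimB _ hc
      rcases eq_or_comp (show y.1 = ((y.1, c) : Lit).1 from rfl) with h | h
      · have hpure : ((y.1, c) : Lit) ∈ pureC F := mem_pureC.mpr ⟨h ▸ hyF, hcb⟩
        cases c
        · exact hnp0 hpure
        · exact hnp1 hpure
      · exact hcb (h ▸ hyF)
    -- unsatisfiability of the reduct
    have hunsat : unsat (papply (pureFalse F) F) := by
      rintro ⟨a, ha⟩
      set a' : ℕ → Bool := fun v =>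
        if ((v, true) : Lit) ∈ K then false
        else if ((v, false) : Lit) ∈ K then true else a v with ha'def
      have hKfalse : ∀ z ∈ K, Lit.eval a' z = false := by
        intro z hz
        obtain ⟨v, b⟩ := z
        cases b
        · have h1 : ((v, true) : Lit) ∉ K := by
            intro h
            have := htf _ h
            simp [Lit.comp] at this
            exact this hz
          simp [Lit.eval, ha'def, h1, hz]
        · simp [Lit.eval, ha'def, hz]
      have ha' : satisfies a' (papply (pureFalse F) F) := by
        intro D' hD'
        have hD2 := hD'
        rw [papply_eq (Finset.Subset.refl F)] at hD2
        obtain ⟨D, hD, rfl⟩ := Finset.mem_image.mp hD2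
        obtain ⟨y, hy, hey⟩ := ha _ hD'
        refine ⟨y, hy, ?_⟩
        rw [← hey]
        apply (eval_congr _).symm
        have h1 := keyvar D hD y hy true
        have h0 := keyvar D hD y hy false
        simp [ha'def, h1, h0]
      have haF : satisfies a' F := sat_of_sat_papply (Finset.Subset.refl F) ha'
      obtain ⟨z, hz, hez⟩ := hent a' haF
      rw [hKfalse z hz] at hez
      exact Bool.false_ne_true hez
    refine ⟨⟨hunsat, ?_⟩, ?_⟩
    -- minimality of the reduct
    · intro G hG hGunsat
      set F' := F.filter (fun D => papplyC (pureFalse F) D ∈ G) with hF'def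
      have hF'sub : F' ⊆ F := Finset.filter_subset _ _
      have himg : F'.image (papplyC (pureFalse F)) = G := by
        apply Finset.Subset.antisymm
        · intro g hg
          obtain ⟨D, hD, rfl⟩ := Finset.mem_image.mp hg
          exact (Finset.mem_filter.mp hD).2
        · intro g hg
          have hgF : g ∈ papply (pureFalse F) F := hG.1 hg
          rw [papply_eq (Finset.Subset.refl F)] at hgF
          obtain ⟨D, hD, rfl⟩ := Finset.mem_image.mp hgF
          exact Finset.mem_image_of_mem _ (Finset.mem_filter.mpr ⟨hD, hg⟩)
      have hF'strict : F' ⊂ F := by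
        refine ⟨hF'sub, fun hsub => ?_⟩
        have hFF : F' = F := Finset.Subset.antisymm hF'sub hsub
        rw [hFF] at himg
        exact hG.2 (by rw [papply_eq (Finset.Subset.refl F), himg])
      have hne := hmin F' hF'strict
      unfold entails at hne; push_neg at hne
      obtain ⟨a, haF', haK⟩ := hne
      have hpure : ∀ x ∈ pureC F, Lit.eval a x = false := by
        intro x hx
        by_contra h
        exact haK ⟨x, claimA hx, by simpa using h⟩
      refine hGunsat ⟨a, ?_⟩
      rw [← himg, ← papply_eq hF'sub]
      exact sat_papply_of_sat hF'sub hpure haF'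
    -- contraction-freeness
    · intro C hC D hD hne heq
      have hCred : papplyC (pureFalse F) C = papplyC (pureFalse F) D := by
        rw [papply_eq (show ({C} : ClauseSet) ⊆ F by simpa using hC),
          papply_eq (show ({D} : ClauseSet) ⊆ F by simpa using hD)] at heq
        simpa using heq
      have hF'strict : F.erase C ⊂ F := Finset.erase_ssubset hC
      apply hmin _ hF'strict
      intro a haF'
      by_contra haK
      have hpure : ∀ x ∈ pureC F, Lit.eval a x = false := by
        intro x hx
        by_contra h
        exact haK ⟨x, claimA hx, by simpa using h⟩
      have hDF' : D ∈ F.erase C := Finset.mem_erase.mpr ⟨Ne.symm hne, hD⟩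
      obtain ⟨y, hyD, hey⟩ := haF' D hDF'
      have hyred : y ∈ papplyC (pureFalse F) D := by
        refine Finset.mem_filter.mpr ⟨hyD, fun hv => ?_⟩
        have h := hpure y (pval_false_iff.mp hv)
        rw [hey] at h
        simp at h
      rw [← hCred] at hyred
      have hyC : y ∈ C := (Finset.mem_filter.mp hyred).1
      have haF : satisfies a F := by
        intro E hE
        by_cases hEC : E = C
        · exact ⟨y, hEC ▸ hyC, hey⟩
        · exact haF' E (Finset.mem_erase.mpr ⟨hEC, hE⟩)
      exact haK (hent a haF)
  · rintro ⟨⟨hunsat, hminU⟩, hcf⟩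
    refine ⟨pureC F, ?_, ?_, ?_⟩
    · intro x hx hcx
      exact (mem_pureC.mp hx).2 ((Finset.filter_subset _ _) hcx)
    · intro a haF
      by_contra hnsat
      have hpure : ∀ x ∈ pureC F, Lit.eval a x = false := by
        intro x hx
        by_contra h
        exact hnsat ⟨x, hx, by simpa using h⟩
      exact hunsat ⟨a, sat_papply_of_sat (Finset.Subset.refl F) hpure haF⟩
    · intro F' hF' hent'
      have himg_strict : F'.image (papplyC (pureFalse F)) ⊂
          F.image (papplyC (pureFalse F)) := by
        refine ⟨Finset.image_subset_image hF'.1, fun hsub => ?_⟩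
        obtain ⟨D, hDF, hDF'⟩ := Finset.exists_of_ssubset hF'
        have hmem : papplyC (pureFalse F) D ∈ F'.image (papplyC (pureFalse F)) :=
          hsub (Finset.mem_image_of_mem _ hDF)
        obtain ⟨D', hD', hDD'⟩ := Finset.mem_image.mp hmem
        have hneDD : D ≠ D' := fun h => hDF' (h ▸ hD')
        apply hcf D hDF D' (hF'.1 hD') hneDD
        rw [papply_eq (show ({D} : ClauseSet) ⊆ F by simpa using hDF),
          papply_eq (show ({D'} : ClauseSet) ⊆ F by simpa using hF'.1 hD'),
          Finset.image_singleton, Finset.image_singleton, hDD']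
      have hstrict : papply (pureFalse F) F' ⊂ papply (pureFalse F) F := by
        rw [papply_eq hF'.1, papply_eq (Finset.Subset.refl F)]
        exact himg_strict
      have hsat := hminU _ hstrict
      unfold unsat at hsat
      obtain ⟨a, ha⟩ := not_not.mp hsat
      set a' : ℕ → Bool := fun v =>
        if ((v, true) : Lit) ∈ pureC F then false
        else if ((v, false) : Lit) ∈ pureC F then true else a v with ha'def
      have ha'P : satisfies a' (papply (pureFalse F) F') := by
        intro D' hD'
        have hD2 := hD'
        rw [papply_eq hF'.1] at hD2
        obtain ⟨D, hD, rfl⟩ := Finset.mem_image.mp hD2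
        obtain ⟨y, hy, hey⟩ := ha _ hD'
        refine ⟨y, hy, ?_⟩
        rw [← hey]
        apply (eval_congr _).symm
        obtain ⟨_, hnp1, hnp0⟩ := reduct_not_pure (hF'.1 hD) hy
        simp [ha'def, hnp1, hnp0]
      have ha'F' : satisfies a' F' := sat_of_sat_papply hF'.1 ha'P
      obtain ⟨x, hx, hex⟩ := hent' a' ha'F'
      obtain ⟨v, b⟩ := x
      cases b
      · have h1 : ((v, true) : Lit) ∉ pureC F := fun h => not_both_pure h hx
        simp [Lit.eval, ha'def, h1, hx] at hex
      · simp [Lit.eval, ha'def, hx] at hex
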